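/- arXiv:1106.2470 — 4 statements merged into one kernel-verified Lean document; each statement's English description precedes it below -/
import Mathlib

section
/- A set S ⊆ ℕ^ℕ is guessable if and only if S is in the Borel pointclass Δ⁰₂ (i.e., S is both a countable union of closed sets and a countable intersection of open sets in the product topology on ℕ^ℕ). -/
open Ordinal Filter Topology

/-- The first `n` values of `f` as a finite sequence. -/
def seg (f : ℕ → ℕ) (n : ℕ) : List ℕ := (List.range n).map f

/-- `[X]`: the set of infinite sequences all of whose initial segments lie in `X`. -/
def ext (X : Set (List ℕ)) : Set (ℕ → ℕ) := {f | ∀ n, seg f n ∈ X}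

/-- `σ` is an initial segment of `f`. -/
def isInit (σ : List ℕ) (f : ℕ → ℕ) : Prop := seg f σ.length = σ

/-- One step of the derivative process relative to `S`. -/
def derivStep (S : Set (ℕ → ℕ)) (X : Set (List ℕ)) : Set (List ℕ) :=
  {x ∈ X | ∃ f g : ℕ → ℕ, f ∈ ext X ∧ g ∈ ext X ∧ isInit x f ∧ isInit x g ∧ f ∈ S ∧ g ∉ S}

/-- The transfinite sequence `S_α`. -/
noncomputable def dSeq (S : Set (ℕ → ℕ)) (α : Ordinal.{0}) : Set (List ℕ) :=
  Ordinal.limitRecOn α Set.univ (fun _ X => derivStep S X)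
    (fun o _ ih => ⋂ (β : Set.Iio o), ih β.1 β.2)

/-- `α(S)`: the least ordinal where the process stabilizes. -/
noncomputable def kernelOrd (S : Set (ℕ → ℕ)) : Ordinal.{0} :=
  sInf {α | dSeq S α = dSeq S (α + 1)}

/-- `S_∞`, the kernel. -/
noncomputable def kernel (S : Set (ℕ → ℕ)) : Set (List ℕ) := dSeq S (kernelOrd S)

/-- `β(σ)`: the least ordinal `α` with `σ ∉ S_α`. -/
noncomputable def bOrd (S : Set (ℕ → ℕ)) (σ : List ℕ) : Ordinal.{0} :=
  sInf {α | σ ∉ dSeq S α}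

open Classical in
/-- `S` is guessable. -/
def Guessable (S : Set (ℕ → ℕ)) : Prop :=
  ∃ G : List ℕ → ℕ, ∀ f : ℕ → ℕ,
    Tendsto (fun n => G (seg f n)) atTop (𝓝 (if f ∈ S then 1 else 0))

/-- `Δ⁰₂`: both a countable union of closed sets and a countable intersection of open sets. -/
def IsDelta02 (S : Set (ℕ → ℕ)) : Prop :=
  (∃ F : ℕ → Set (ℕ → ℕ), (∀ n, IsClosed (F n)) ∧ S = ⋃ n, F n) ∧
  (∃ U : ℕ → Set (ℕ → ℕ), (∀ n, IsOpen (U n)) ∧ S = ⋂ n, U n)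

/- ### Auxiliary lemmas -/

lemma seg_length (f : ℕ → ℕ) (n : ℕ) : (seg f n).length = n := by simp [seg]

lemma seg_eq_iff {f g : ℕ → ℕ} {n : ℕ} : seg f n = seg g n ↔ ∀ i < n, f i = g i := by
  simp [seg, List.map_inj_left, List.mem_range]

lemma tendsto_iff_ev {g : ℕ → ℕ} {c : ℕ} :
    Tendsto g atTop (𝓝 c) ↔ ∀ᶠ n in atTop, g n = c := by
  rw [nhds_discrete, tendsto_pure]

lemma cyl_basis {O : Set (ℕ → ℕ)} (hO : IsOpen O) {f : ℕ → ℕ} (hf : f ∈ O) :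
    ∃ n, ∀ g, seg g n = seg f n → g ∈ O := by
  obtain ⟨I, u, hu, hsub⟩ := isOpen_pi_iff.mp hO f hf
  rcases I.bddAbove with ⟨N, hN⟩
  refine ⟨N + 1, fun g hg => hsub ?_⟩
  intro i hi
  have : g i = f i := seg_eq_iff.mp hg i (Nat.lt_succ_of_le (hN hi))
  rw [this]; exact (hu i hi).2

lemma closed_escape {C : Set (ℕ → ℕ)} (hC : IsClosed C) {f : ℕ → ℕ} (hf : f ∉ C) :
    ∃ K, ∀ k ≥ K, ¬∃ g ∈ C, seg g k = seg f k := by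
  obtain ⟨n, hn⟩ := cyl_basis hC.isOpen_compl hf
  refine ⟨n, fun k hk ⟨g, hgC, hgk⟩ => ?_⟩
  have : seg g n = seg f n := seg_eq_iff.mpr fun i hi => seg_eq_iff.mp hgk i (lt_of_lt_of_le hi hk)
  exact hn g this hgC

lemma isOpen_seg_pred (P : List ℕ → Prop) (n : ℕ) : IsOpen {f : ℕ → ℕ | P (seg f n)} := by
  rw [isOpen_iff_forall_mem_open]
  intro f hf
  refine ⟨{g | seg g n = seg f n}, fun g hg => ?_, ?_, rfl⟩
  · show P (seg g n); rw [Set.mem_setOf_eq] at hg; rw [hg]; exact hf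
  · have : {g : ℕ → ℕ | seg g n = seg f n} = (↑(Finset.range n) : Set ℕ).pi (fun i => {f i}) := by
      ext g; simp [seg_eq_iff, Set.mem_pi]
    rw [this]
    exact isOpen_set_pi (Finset.range n).finite_toSet (fun i _ => isOpen_discrete _)

lemma isClosed_seg_pred (P : List ℕ → Prop) (n : ℕ) : IsClosed {f : ℕ → ℕ | P (seg f n)} := by
  rw [← isOpen_compl_iff]
  have : {f : ℕ → ℕ | P (seg f n)}ᶜ = {f : ℕ → ℕ | ¬ P (seg f n)} := rfl
  rw [this]; exact isOpen_seg_pred (fun σ => ¬ P σ) n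

lemma guessable_to_delta {S : Set (ℕ → ℕ)} (h : Guessable S) : IsDelta02 S := by
  classical
  obtain ⟨G, hG⟩ := h
  -- A c N : the set of f such that G(seg f n) = c for all n ≥ N
  set A : ℕ → ℕ → Set (ℕ → ℕ) := fun c N => ⋂ n, {f | N ≤ n → G (seg f n) = c} with hA
  have hAclosed : ∀ c N, IsClosed (A c N) := fun c N =>
    isClosed_iInter (fun n => isClosed_seg_pred (fun σ => N ≤ n → G σ = c) n)
  have hmemA : ∀ c N f, f ∈ A c N ↔ ∀ n ≥ N, G (seg f n) = c := by
    intro c N f; simp [hA]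
  have hev : ∀ f : ℕ → ℕ, ∀ᶠ n in atTop, G (seg f n) = (if f ∈ S then 1 else 0) :=
    fun f => tendsto_iff_ev.mp (hG f)
  have hS1 : S = ⋃ N, A 1 N := by
    ext f
    simp only [Set.mem_iUnion, hmemA]
    constructor
    · intro hf
      obtain ⟨N, hN⟩ := eventually_atTop.mp (hev f)
      exact ⟨N, fun n hn => by simpa [hf] using hN n hn⟩
    · rintro ⟨N, hN⟩
      by_contra hf
      obtain ⟨M, hM⟩ := eventually_atTop.mp (hev f)
      have h0 : G (seg f (max N M)) = 0 := by simpa [hf] using hM _ (le_max_right N M)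
      have h1 : G (seg f (max N M)) = 1 := hN _ (le_max_left N M)
      omega
  have hS0 : Sᶜ = ⋃ N, A 0 N := by
    ext f
    simp only [Set.mem_iUnion, hmemA, Set.mem_compl_iff]
    constructor
    · intro hf
      obtain ⟨N, hN⟩ := eventually_atTop.mp (hev f)
      exact ⟨N, fun n hn => by simpa [hf] using hN n hn⟩
    · rintro ⟨N, hN⟩
      intro hf
      obtain ⟨M, hM⟩ := eventually_atTop.mp (hev f)
      have h1 : G (seg f (max N M)) = 1 := by simpa [hf] using hM _ (le_max_right N M)
      have h0 : G (seg f (max N M)) = 0 := hN _ (le_max_left N M)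
      omega
  refine ⟨⟨A 1, hAclosed 1, hS1⟩, ⟨fun N => (A 0 N)ᶜ, fun N => (hAclosed 0 N).isOpen_compl, ?_⟩⟩
  have := congrArg (·ᶜ) hS0
  simp only [compl_compl, Set.compl_iUnion] at this
  exact this

lemma delta_to_guessable {S : Set (ℕ → ℕ)} (h : IsDelta02 S) : Guessable S := by
  classical
  obtain ⟨⟨F, hFc, hFS⟩, ⟨U, hUo, hUS⟩⟩ := h
  set C : ℕ → Set (ℕ → ℕ) := fun n => (U n)ᶜ with hC
  have hCc : ∀ n, IsClosed (C n) := fun n => (hUo n).isClosed_compl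
  have hCS : Sᶜ = ⋃ n, C n := by rw [hUS, Set.compl_iInter]
  set R : ℕ → Set (ℕ → ℕ) := fun m => if Even m then F (m / 2) else C (m / 2) with hR
  have hRc : ∀ m, IsClosed (R m) := by
    intro m; rw [hR]; dsimp only; split_ifs; exacts [hFc _, hCc _]
  have hRsub : ∀ m f, f ∈ R m → (f ∈ S ↔ Even m) := by
    intro m f hf
    rw [hR] at hf; dsimp only at hf
    by_cases hm : Even m
    · rw [if_pos hm] at hf
      simp only [hm, iff_true]
      rw [hFS]; exact Set.mem_iUnion.mpr ⟨m / 2, hf⟩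
    · rw [if_neg hm] at hf
      simp only [hm, iff_false]
      intro hfS
      have : f ∈ Sᶜ := by rw [hCS]; exact Set.mem_iUnion.mpr ⟨m / 2, hf⟩
      exact this hfS
  have hexists : ∀ f, ∃ m, f ∈ R m := by
    intro f
    by_cases hf : f ∈ S
    · rw [hFS] at hf
      obtain ⟨n, hn⟩ := Set.mem_iUnion.mp hf
      refine ⟨2 * n, ?_⟩
      rw [hR]; dsimp only
      rw [if_pos (even_two_mul n)]
      simpa using hn
    · have hf' : f ∈ Sᶜ := hf
      rw [hCS] at hf'
      obtain ⟨n, hn⟩ := Set.mem_iUnion.mp hf'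
      refine ⟨2 * n + 1, ?_⟩
      rw [hR]; dsimp only
      rw [if_neg (by simp [Nat.even_add_one, parity_simps])]
      simpa [Nat.mul_add_div] using hn
  -- the guessing function
  refine ⟨fun σ => if h : ∃ m, m ≤ σ.length ∧ ∃ g ∈ R m, seg g σ.length = σ
      then (if Even (Nat.find h) then 1 else 0) else 0, ?_⟩
  intro f
  set m₀ := Nat.find (hexists f) with hm₀
  have hfm₀ : f ∈ R m₀ := Nat.find_spec (hexists f)
  have hmin : ∀ m < m₀, f ∉ R m := fun m hm => Nat.find_min (hexists f) hm
  have escape : ∀ m, ∃ K, m < m₀ → ∀ k ≥ K, ¬∃ g ∈ R m, seg g k = seg f k := by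
    intro m
    by_cases hm : m < m₀
    · obtain ⟨K, hK⟩ := closed_escape (hRc m) (hmin m hm)
      exact ⟨K, fun _ => hK⟩
    · exact ⟨0, fun h => absurd h hm⟩
  choose Kf hKf using escape
  set K := max m₀ ((Finset.range m₀).sup Kf) with hKdef
  rw [tendsto_iff_ev, eventually_atTop]
  refine ⟨K, fun k hk => ?_⟩
  have hlen : (seg f k).length = k := seg_length f k
  have hwit : ∃ m, m ≤ (seg f k).length ∧ ∃ g ∈ R m, seg g (seg f k).length = seg f k := by
    refine ⟨m₀, ?_, ⟨f, hfm₀, by rw [hlen]⟩⟩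
    rw [hlen]; exact le_trans (le_max_left _ _) hk
  have hfind : Nat.find hwit = m₀ := by
    apply le_antisymm
    · exact Nat.find_le ⟨by rw [hlen]; exact le_trans (le_max_left _ _) hk, ⟨f, hfm₀, by rw [hlen]⟩⟩
    · by_contra hlt
      push_neg at hlt
      have hm : Nat.find hwit < m₀ := hlt
      obtain ⟨g, hg1, hg2⟩ := (Nat.find_spec hwit).2
      rw [hlen] at hg2
      have hkK : k ≥ Kf (Nat.find hwit) := le_trans
        (le_trans (Finset.le_sup (Finset.mem_range.mpr hm)) (le_max_right _ _)) hk
      exact hKf (Nat.find hwit) hm k hkK ⟨g, hg1, hg2⟩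
  show (if h : ∃ m, m ≤ (seg f k).length ∧ ∃ g ∈ R m, seg g (seg f k).length = seg f k
      then (if Even (Nat.find h) then 1 else 0) else 0) = (if f ∈ S then 1 else 0)
  rw [dif_pos hwit, hfind]
  have := hRsub m₀ f hfm₀
  by_cases hfS : f ∈ S
  · simp [hfS, this.mp hfS]
  · have : ¬ Even m₀ := fun he => hfS (this.mpr he)
    simp [hfS, this]

theorem stmt6 (S : Set (ℕ → ℕ)) : Guessable S ↔ IsDelta02 S :=
  ⟨guessable_to_delta, delta_to_guessable⟩
end

section
/- If S ⊆ ℕ^ℕ is guessable, then S_∞ = ∅. Equivalently, if S_∞ ≠ ∅ then S is not guessable. -/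
/-!
If `G` guesses `S`, the kernel `K = S_∞` is a fixed point of the derivative, so every node of `K`
has extensions along branches of `[K]` lying in `S` and outside `S`. Following such a branch far
enough, `G` can be forced to output `1`, and along the other one `0`, at a proper extension that
is still in `K`. Alternating the two, a nonempty `K` yields an increasing chain of nodes whose
union is a sequence on which `G` changes its guess infinitely often, which is impossible.
-/

open Ordinal Filter Topology

lemma seg_prefix_seg (f : ℕ → ℕ) {m n : ℕ} (h : m ≤ n) : seg f m <+: seg f n := by
  have : seg f m = (seg f n).take m := by
    simp [seg, ← List.map_take, List.take_range, Nat.min_eq_left h]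
  exact this ▸ List.take_prefix _ _

section Derivative

variable (S : Set (ℕ → ℕ))

lemma dSeq_succ (α : Ordinal.{0}) : dSeq S (α + 1) = derivStep S (dSeq S α) := by
  rw [dSeq, Ordinal.limitRecOn_add_one]; rfl

lemma dSeq_limit {o : Ordinal.{0}} (ho : Order.IsSuccLimit o) :
    dSeq S o = ⋂ β : Set.Iio o, dSeq S β.1 := by
  rw [dSeq, Ordinal.limitRecOn_limit _ _ _ _ ho]; rfl

lemma dSeq_antitone : Antitone (dSeq S) := by
  intro α β hle
  induction β using Ordinal.limitRecOn with
  | zero => rw [nonpos_iff_eq_zero.mp hle]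
  | add_one β ih =>
    rcases hle.lt_or_eq with hlt | rfl
    · rw [dSeq_succ]
      exact (ih (Order.lt_add_one_iff.mp hlt)).trans' fun _ hx => hx.1
    · rfl
  | limit β hβ ih =>
    rcases hle.lt_or_eq with hlt | rfl
    · rw [dSeq_limit S hβ]
      exact Set.iInter_subset_of_subset ⟨α, hlt⟩ le_rfl
    · rfl

/-- The sequence cannot strictly decrease forever: `dSeq S` maps the proper class of ordinals
into the set `Set (List ℕ)`, so it is not injective. -/
lemma exists_dSeq_eq_dSeq_succ : ∃ α, dSeq S α = dSeq S (α + 1) := by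
  obtain ⟨α, β, heq, hne⟩ : ∃ α β, dSeq S α = dSeq S β ∧ α ≠ β := by
    simpa [Function.Injective] using not_injective_of_ordinal (dSeq S)
  wlog hlt : α < β generalizing α β
  · exact this β α heq.symm hne.symm (hne.symm.lt_of_le (not_lt.mp hlt))
  refine ⟨α, (dSeq_antitone S (Order.le_succ α)).antisymm' ?_⟩
  exact heq ▸ dSeq_antitone S (Order.add_one_le_of_lt hlt)

lemma derivStep_kernel : derivStep S (kernel S) = kernel S :=
  (dSeq_succ S _).symm.trans (csInf_mem (exists_dSeq_eq_dSeq_succ S)).symm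

end Derivative

lemma exists_extension_of_eventually_eq {X : Set (List ℕ)} {G : List ℕ → ℕ} {x : List ℕ}
    {f : ℕ → ℕ} {c : ℕ} (hf : f ∈ ext X) (hxf : isInit x f)
    (hG : ∀ᶠ n in atTop, G (seg f n) = c) :
    ∃ y ∈ X, x <+: y ∧ x.length < y.length ∧ G y = c := by
  obtain ⟨n, hn, hlt⟩ := (hG.and (eventually_gt_atTop x.length)).exists
  have hpre := seg_prefix_seg f hlt.le
  rw [hxf] at hpre
  exact ⟨seg f n, hf n, hpre, by rwa [seg_length], hn⟩

open Classical in
lemma exists_extension_of_mem_derivStep {S : Set (ℕ → ℕ)} {X : Set (List ℕ)}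
    {G : List ℕ → ℕ}
    (hG : ∀ f, Tendsto (fun n => G (seg f n)) atTop (𝓝 (if f ∈ S then 1 else 0)))
    {x : List ℕ} (hx : x ∈ derivStep S X) {v : ℕ} (hv : v ≤ 1) :
    ∃ y ∈ X, x <+: y ∧ x.length < y.length ∧ G y = v := by
  obtain ⟨-, f, g, hf, hg, hxf, hxg, hfS, hgS⟩ := hx
  interval_cases v
  · exact exists_extension_of_eventually_eq hg hxg (by simpa [hgS, nhds_discrete] using hG g)
  · exact exists_extension_of_eventually_eq hf hxf (by simpa [hfS, nhds_discrete] using hG f)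

lemma exists_prefix_chain {K : Set (List ℕ)} {p : ℕ → List ℕ → Prop}
    (hK : ∀ x ∈ K, ∀ k, ∃ y ∈ K, x <+: y ∧ x.length < y.length ∧ p k y)
    {x₀ : List ℕ} (hx₀ : x₀ ∈ K) :
    ∃ F : ℕ → List ℕ, (∀ k, F k <+: F (k + 1)) ∧
      (∀ k, (F k).length < (F (k + 1)).length) ∧ ∀ k, p k (F (k + 1)) := by
  choose! next hnext using hK
  let F : ℕ → List ℕ := fun k => Nat.rec x₀ (fun k y => next y k) k
  have hF : ∀ k, F k ∈ K := fun k => Nat.rec hx₀ (fun k ih => (hnext _ ih k).1) k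
  exact ⟨F, fun k => (hnext _ (hF k) k).2.1, fun k => (hnext _ (hF k) k).2.2.1,
    fun k => (hnext _ (hF k) k).2.2.2⟩

lemma exists_seg_eq_of_prefix_chain {F : ℕ → List ℕ} (hpre : ∀ k, F k <+: F (k + 1))
    (hlen : ∀ k, (F k).length < (F (k + 1)).length) :
    ∃ h : ℕ → ℕ, ∀ k, seg h (F k).length = F k := by
  have hchain : ∀ {j k}, j ≤ k → F j <+: F k := fun hjk =>
    Nat.le_induction (List.prefix_refl _) (fun k _ ih => ih.trans (hpre k)) _ hjk
  have hk : ∀ k, k < (F (k + 1)).length := fun k =>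
    (strictMono_nat_of_lt_succ hlen).id_le (k + 1)
  refine ⟨fun n => (F (n + 1))[n]'(hk n), fun k => List.ext_getElem (seg_length _ _) ?_⟩
  intro i hi hik
  simp only [seg, List.getElem_map, List.getElem_range]
  rcases le_total (i + 1) k with hle | hle
  · exact (hchain hle).getElem _
  · exact ((hchain hle).getElem hik).symm

lemma exists_not_eventually_const {K : Set (List ℕ)} {G : List ℕ → ℕ}
    (hK : ∀ x ∈ K, ∀ v ≤ 1, ∃ y ∈ K, x <+: y ∧ x.length < y.length ∧ G y = v)
    (hne : K.Nonempty) :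
    ∃ h : ℕ → ℕ, ∀ c, ¬ ∀ᶠ n in atTop, G (seg h n) = c := by
  obtain ⟨x₀, hx₀⟩ := hne
  obtain ⟨F, hpre, hlen, hF⟩ := exists_prefix_chain (p := fun k y => G y = k % 2)
    (fun x hx k => hK x hx _ (by omega)) hx₀
  obtain ⟨h, hh⟩ := exists_seg_eq_of_prefix_chain hpre hlen
  refine ⟨h, fun c hc => ?_⟩
  obtain ⟨N, hN⟩ := eventually_atTop.mp hc
  have hlenN : ∀ k, N < k → N ≤ (F k).length := fun k hk =>
    hk.le.trans ((strictMono_nat_of_lt_succ hlen).id_le k)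
  have hG₁ := hN _ (hlenN (N + 1) (by omega))
  have hG₂ := hN _ (hlenN (N + 2) (by omega))
  rw [hh, hF] at hG₁ hG₂
  omega

theorem stmt7 (S : Set (ℕ → ℕ)) (h : Guessable S) : kernel S = ∅ := by
  obtain ⟨G, hG⟩ := h
  refine Set.not_nonempty_iff_eq_empty.mp fun hne => ?_
  have hsplit : ∀ x ∈ kernel S, ∀ v ≤ 1,
      ∃ y ∈ kernel S, x <+: y ∧ x.length < y.length ∧ G y = v := fun x hx _ hv =>
    exists_extension_of_mem_derivStep hG ((derivStep_kernel S).symm ▸ hx) hv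
  obtain ⟨f, hf⟩ := exists_not_eventually_const hsplit hne
  exact hf _ (by simpa [nhds_discrete] using hG f)
end

section
/- If S_∞ = ∅, then S is guessable: there exists G : ℕ^{<ℕ} → ℕ such that for every f : ℕ → ℕ, G(f↾n) converges to 1 if f ∈ S and to 0 if f ∉ S. -/
/-!
Since `S_∞ = ∅`, every finite sequence `σ` leaves the derivative process at a successor stage
`β(σ) = γ + 1`. At level `γ` the set `S` is constant on the extensions of `σ` in `[S_γ]`:
one member and one non-member would put `σ` into `S_{γ+1}`. So the guess at `σ` is whether `σ`
has an extension in `S ∩ [S_γ]`. Along a fixed `f`, the ranks `β(f↾n)` form a non-increasing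
sequence of ordinals, hence are eventually constant, say equal to `γ + 1`; then `f ∈ [S_γ]`
and from that point on the guesses are correct.
-/

open Ordinal Filter Topology

lemma isInit_seg (f : ℕ → ℕ) (n : ℕ) : isInit (seg f n) f := by
  simp [isInit, seg_length]

lemma isInit_seg_of_le {f g : ℕ → ℕ} {m n : ℕ} (h : isInit (seg f m) g) (hnm : n ≤ m) :
    isInit (seg f n) g := by
  rw [isInit, seg_length] at h ⊢
  simp only [seg, List.map_inj_left, List.mem_range] at h ⊢
  exact fun a ha => h a (ha.trans_le hnm)

section dSeq

variable (S : Set (ℕ → ℕ))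

lemma dSeq_zero : dSeq S 0 = Set.univ :=
  limitRecOn_zero _ _ _

lemma dSeq_add_one (α : Ordinal) : dSeq S (α + 1) = derivStep S (dSeq S α) :=
  limitRecOn_add_one _ _ _ _

lemma dSeq_of_isSuccPrelimit {o : Ordinal} (ho : Order.IsSuccPrelimit o) :
    dSeq S o = ⋂ β : Set.Iio o, dSeq S β := by
  obtain rfl | ho0 := eq_or_ne o 0
  · simp [dSeq_zero]
  · exact limitRecOn_limit _ _ _ _ (.mk (by simpa using ho0) ho)

lemma seg_mem_dSeq_of_le (α : Ordinal) (f : ℕ → ℕ) {m n : ℕ} (hnm : n ≤ m)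
    (hm : seg f m ∈ dSeq S α) : seg f n ∈ dSeq S α := by
  induction α using limitRecOn with
  | zero => simp [dSeq_zero]
  | add_one γ ih =>
    rw [dSeq_add_one] at hm ⊢
    obtain ⟨hγ, g, g', hg, hg', hgf, hg'f, hgS, hg'S⟩ := hm
    exact ⟨ih hγ, g, g', hg, hg', isInit_seg_of_le hgf hnm, isInit_seg_of_le hg'f hnm, hgS, hg'S⟩
  | limit o ho ih =>
    rw [dSeq_of_isSuccPrelimit S ho.isSuccPrelimit, Set.mem_iInter] at hm ⊢
    exact fun β => ih β.1 β.2 (hm β)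

lemma mem_dSeq_of_lt_bOrd {σ : List ℕ} {α : Ordinal} (hα : α < bOrd S σ) : σ ∈ dSeq S α := by
  by_contra hσ
  exact hα.not_ge (csInf_le' hσ)

end dSeq

open Classical in
noncomputable def guess (S : Set (ℕ → ℕ)) (σ : List ℕ) : ℕ :=
  if ∃ g ∈ S ∩ ext (dSeq S (pred (bOrd S σ))), isInit σ g then 1 else 0

section EmptyKernel

variable {S : Set (ℕ → ℕ)} (hk : kernel S = ∅)
include hk

lemma notMem_dSeq_kernelOrd (σ : List ℕ) : σ ∉ dSeq S (kernelOrd S) :=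
  show σ ∉ kernel S by simp [hk]

lemma notMem_dSeq_bOrd (σ : List ℕ) : σ ∉ dSeq S (bOrd S σ) :=
  csInf_mem (s := {α | σ ∉ dSeq S α}) ⟨kernelOrd S, notMem_dSeq_kernelOrd hk σ⟩

lemma not_isSuccPrelimit_bOrd (σ : List ℕ) : ¬ Order.IsSuccPrelimit (bOrd S σ) := by
  intro hlim
  apply notMem_dSeq_bOrd hk σ
  rw [dSeq_of_isSuccPrelimit S hlim, Set.mem_iInter]
  exact fun β => mem_dSeq_of_lt_bOrd S β.2

lemma mem_dSeq_pred_bOrd (σ : List ℕ) : σ ∈ dSeq S (pred (bOrd S σ)) :=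
  mem_dSeq_of_lt_bOrd S (pred_lt_iff_not_isSuccPrelimit.2 (not_isSuccPrelimit_bOrd hk σ))

lemma antitone_bOrd_seg (f : ℕ → ℕ) : Antitone fun n => bOrd S (seg f n) := by
  intro n m hnm
  refine csInf_le_csInf (OrderBot.bddBelow _) ⟨kernelOrd S, notMem_dSeq_kernelOrd hk _⟩ ?_
  exact fun α hα hm => hα (seg_mem_dSeq_of_le S α f hnm hm)

lemma pred_bOrd_add_one (σ : List ℕ) : pred (bOrd S σ) + 1 = bOrd S σ := by
  rw [← Order.succ_eq_add_one, succ_pred_eq_iff_not_isSuccPrelimit]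
  exact not_isSuccPrelimit_bOrd hk σ

lemma mem_iff_mem_of_mem_ext {σ : List ℕ} {f g : ℕ → ℕ}
    (hf : f ∈ ext (dSeq S (pred (bOrd S σ)))) (hg : g ∈ ext (dSeq S (pred (bOrd S σ))))
    (hσf : isInit σ f) (hσg : isInit σ g) : f ∈ S ↔ g ∈ S := by
  by_contra hfg
  have hσ : σ ∈ dSeq S (pred (bOrd S σ) + 1) := by
    rw [dSeq_add_one]
    refine ⟨mem_dSeq_pred_bOrd hk σ, ?_⟩
    by_cases hfS : f ∈ S
    · exact ⟨f, g, hf, hg, hσf, hσg, hfS, by tauto⟩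
    · exact ⟨g, f, hg, hf, hσg, hσf, by tauto, hfS⟩
  exact notMem_dSeq_bOrd hk σ (pred_bOrd_add_one hk σ ▸ hσ)

lemma eventually_mem_ext_dSeq_pred_bOrd (f : ℕ → ℕ) :
    ∀ᶠ n in atTop, f ∈ ext (dSeq S (pred (bOrd S (seg f n)))) := by
  obtain ⟨N, hN⟩ := WellFoundedLT.antitone_chain_condition (antitone_bOrd_seg hk f)
  filter_upwards [eventually_ge_atTop N] with n hn m
  have hmax := mem_dSeq_pred_bOrd hk (seg f (max m n))
  rw [← hN _ (hn.trans (le_max_right m n)), hN n hn] at hmax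
  exact seg_mem_dSeq_of_le S _ f (le_max_left m n) hmax

open Classical in
lemma guess_eq_of_mem_ext {σ : List ℕ} {f : ℕ → ℕ} (hf : f ∈ ext (dSeq S (pred (bOrd S σ))))
    (hσf : isInit σ f) : guess S σ = if f ∈ S then 1 else 0 := by
  by_cases hfS : f ∈ S
  · rw [guess, if_pos ⟨f, ⟨hfS, hf⟩, hσf⟩, if_pos hfS]
  · rw [guess, if_neg hfS, if_neg]
    rintro ⟨g, ⟨hgS, hg⟩, hσg⟩
    exact hfS ((mem_iff_mem_of_mem_ext hk hf hg hσf hσg).2 hgS)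

end EmptyKernel

open Classical in
theorem stmt8 (S : Set (ℕ → ℕ)) (h : kernel S = ∅) :
    ∃ G : List ℕ → ℕ, ∀ f : ℕ → ℕ,
      Filter.Tendsto (fun n => G (seg f n)) Filter.atTop
        (nhds (if f ∈ S then 1 else 0)) := by
  refine ⟨guess S, fun f => tendsto_const_nhds.congr' ?_⟩
  filter_upwards [eventually_mem_ext_dSeq_pred_bOrd h f] with n hn
  exact (guess_eq_of_mem_ext h hn (isInit_seg f n)).symm
end

section
/- If G : ℕ^{<ℕ} → ℕ is a guesser for S and (σ_k) is a strictly increasing (under extension) sequence of finite sequences with G(σ_k) ≡ k mod 2 for all k > 0, then a contradiction follows; i.e., no such sequence of finite sequences exists. -/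
open Ordinal Filter Topology

open Classical in
theorem stmt15 (S : Set (ℕ → ℕ)) (G : List ℕ → ℕ)
    (hG : ∀ f : ℕ → ℕ, Filter.Tendsto (fun n => G (seg f n)) Filter.atTop
        (nhds (if f ∈ S then 1 else 0)))
    (σ : ℕ → List ℕ)
    (hmono : ∀ k, σ k <+: σ (k + 1) ∧ σ k ≠ σ (k + 1))
    (hpar : ∀ k > 0, G (σ k) % 2 = k % 2) : False := by
  have hchain : ∀ k m, k ≤ m → σ k <+: σ m := by
    intro k m h
    induction m with
    | zero => cases Nat.le_zero.mp h; exact List.prefix_refl _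
    | succ m ih =>
      rcases Nat.lt_or_ge k (m+1) with h' | h'
      · exact (ih (Nat.lt_succ_iff.mp h')).trans (hmono m).1
      · have : k = m + 1 := le_antisymm h h'
        subst this; exact List.prefix_refl _
  have hlen : StrictMono (fun k => (σ k).length) := by
    apply strictMono_nat_of_lt_succ
    intro k
    have h := (hmono k).1
    rcases lt_or_eq_of_le h.length_le with h' | h'
    · exact h'
    · exact absurd (h.eq_of_length h') (hmono k).2
  set f : ℕ → ℕ := fun n => (σ (n+1)).getD n 0 with hf
  have hseg : ∀ k, seg f (σ k).length = σ k := by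
    intro k
    apply List.ext_getElem
    · simp [seg]
    · intro i h1 h2
      simp only [seg, List.getElem_map, List.getElem_range, hf]
      have hik : i < (σ k).length := h2
      have hi1 : i < (σ (i+1)).length := lt_of_lt_of_le (Nat.lt_succ_self i) (hlen.le_apply)
      rcases Nat.le_total (i+1) k with h | h
      · rw [List.getD_eq_getElem _ _ hi1, (hchain _ _ h).getElem hi1]
      · rw [List.getD_eq_getElem _ _ hi1, (hchain _ _ h).getElem hik]
  have htend : Filter.Tendsto (fun k => G (σ k)) Filter.atTop
      (nhds (if f ∈ S then 1 else 0)) := by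
    have := (hG f).comp (hlen.tendsto_atTop)
    exact this.congr fun k => by simp [Function.comp, hseg]
  rw [nhds_discrete, Filter.tendsto_pure] at htend
  obtain ⟨N, hN⟩ := Filter.eventually_atTop.mp htend
  have h1 := hN (2*N+1) (by omega)
  have h2 := hN (2*N+2) (by omega)
  have p1 := hpar (2*N+1) (by omega)
  have p2 := hpar (2*N+2) (by omega)
  rw [h1] at p1; rw [h2] at p2
  omega
end
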